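/- Let n ∈ ℕ+, r = r(n), 1 ≤ v ≤ r, and d ∈ ℕ. The number of minimal monomial generators m of I_n with min(m) = v and total degree d equals the number of integers x with n/p_v < x ≤ n such that no prime factor of x is smaller than p_v and such that Ω(x) = d − 1, where Ω(x) is the number of prime factors of x counted with multiplicity. -/

import Mathlib

/-!
Let `K` be a field, `n ≥ 1`, `r = r(n)` the number of primes `≤ n`,
`v` an index with `1 ≤ v ≤ r` (here `v : Fin r`, 0-indexed, with `x_v`
corresponding to the prime `p_v = Nat.nth Nat.Prime v`), and `d ∈ ℕ`.  The
number of minimal monomial generators of `I_n` with minimal support index `v`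
and total degree `d` equals the number of integers `x` with `n/p_v < x ≤ n`
having no prime factor smaller than `p_v` and with `Ω(x) = d − 1`, where
`Ω(x)` is the number of prime factors of `x` counted with multiplicity.
-/

/-- The weight `p_1^{a_1}⋯p_r^{a_r}` of the exponent vector `a` (0-indexed:
the variable `x_i` corresponds to the `i`-th prime `Nat.nth Nat.Prime i`,
with `Nat.nth Nat.Prime 0 = 2`). -/
noncomputable def weight {r : ℕ} (d : Fin r →₀ ℕ) : ℕ :=
  ∏ i : Fin r, (Nat.nth Nat.Prime (i : ℕ)) ^ d i

/-- The monomial ideal `I_n` of `K[x_1, …, x_r]` generated by all monomials of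
weight `> n`. -/
noncomputable def truncIdeal (K : Type*) [Field K] (n r : ℕ) : Ideal (MvPolynomial (Fin r) K) :=
  Ideal.span {m | ∃ d : Fin r →₀ ℕ, n < weight d ∧ m = MvPolynomial.monomial d (1 : K)}

/-- `d` is the exponent vector of a minimal monomial generator of `I_n`. -/
def IsMinGen (K : Type*) [Field K] (n r : ℕ) (d : Fin r →₀ ℕ) : Prop :=
  MvPolynomial.monomial d (1 : K) ∈ truncIdeal K n r ∧
    ∀ j : Fin r, 0 < d j →
      MvPolynomial.monomial (d - Finsupp.single j 1) (1 : K) ∉ truncIdeal K n r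

lemma weight_pos {r : ℕ} (d : Fin r →₀ ℕ) : 0 < weight d :=
  Finset.prod_pos fun i _ => pow_pos (Nat.prime_nth_prime i).pos _

lemma weight_add {r : ℕ} (a b : Fin r →₀ ℕ) : weight (a + b) = weight a * weight b := by
  simp [weight, pow_add, Finset.prod_mul_distrib]

lemma weight_single {r : ℕ} (j : Fin r) :
    weight (Finsupp.single j 1) = Nat.nth Nat.Prime j := by
  rw [weight, Finset.prod_eq_single j]
  · simp
  · intro i _ hij
    rw [Finsupp.single_eq_of_ne' (Ne.symm hij), pow_zero]
  · simp

lemma weight_eq_mul {r : ℕ} (d : Fin r →₀ ℕ) (j : Fin r) (h : 0 < d j) :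
    weight d = Nat.nth Nat.Prime j * weight (d - Finsupp.single j 1) := by
  have hle : Finsupp.single j 1 ≤ d := by
    rw [Finsupp.single_le_iff]; exact h
  conv_lhs => rw [← tsub_add_cancel_of_le hle]
  rw [weight_add, weight_single, mul_comm]

lemma weight_dvd_of_le {r : ℕ} {a b : Fin r →₀ ℕ} (h : a ≤ b) : weight a ∣ weight b := by
  obtain ⟨c, rfl⟩ := exists_add_of_le h
  rw [weight_add]; exact dvd_mul_right _ _

lemma factorization_weight {r : ℕ} (d : Fin r →₀ ℕ) (j : Fin r) :
    (weight d).factorization (Nat.nth Nat.Prime j) = d j := by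
  have hfp := Nat.factorization_prod (S := (Finset.univ : Finset (Fin r)))
    (g := fun i : Fin r => Nat.nth Nat.Prime (i : ℕ) ^ d i)
    (fun i _ => pow_ne_zero _ (Nat.prime_nth_prime (i : ℕ)).pos.ne')
  rw [weight, hfp, Finset.sum_apply']
  rw [Finset.sum_eq_single j]
  · rw [(Nat.prime_nth_prime (j : ℕ)).factorization_pow, Finsupp.single_eq_same]
  · intro i _ hij
    rw [(Nat.prime_nth_prime (i : ℕ)).factorization_pow, Finsupp.single_eq_of_ne']
    exact fun hc => hij (Fin.ext (Nat.nth_injective Nat.infinite_setOf_prime hc))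
  · simp

lemma weight_injective {r : ℕ} : Function.Injective (weight (r := r)) := fun a b h =>
  Finsupp.ext fun i => by rw [← factorization_weight a i, ← factorization_weight b i, h]

lemma mem_truncIdeal_iff {K : Type*} [Field K] {n r : ℕ} (d : Fin r →₀ ℕ) :
    MvPolynomial.monomial d (1 : K) ∈ truncIdeal K n r ↔ n < weight d := by
  classical
  have hset : {m | ∃ e : Fin r →₀ ℕ, n < weight e ∧ m = MvPolynomial.monomial e (1 : K)}
      = (fun e => MvPolynomial.monomial e (1 : K)) '' {e | n < weight e} := by
    ext m; constructor
    · rintro ⟨e, he, rfl⟩; exact ⟨e, he, rfl⟩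
    · rintro ⟨e, he, rfl⟩; exact ⟨e, he, rfl⟩
  rw [truncIdeal, hset, MvPolynomial.mem_ideal_span_monomial_image]
  have hsupp : (MvPolynomial.monomial d (1 : K)).support = {d} := by
    rw [MvPolynomial.support_monomial, if_neg one_ne_zero]
  constructor
  · intro h
    obtain ⟨e, he, hle⟩ := h d (by rw [hsupp]; exact Finset.mem_singleton_self d)
    exact lt_of_lt_of_le he (Nat.le_of_dvd (weight_pos d) (weight_dvd_of_le hle))
  · intro h xi hxi
    rw [hsupp, Finset.mem_singleton] at hxi
    exact ⟨xi, by rwa [hxi], le_rfl⟩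

lemma isMinGen_iff {K : Type*} [Field K] {n r : ℕ} (d : Fin r →₀ ℕ) :
    IsMinGen K n r d ↔ n < weight d ∧
      ∀ j : Fin r, 0 < d j → weight (d - Finsupp.single j 1) ≤ n := by
  unfold IsMinGen
  rw [mem_truncIdeal_iff]
  refine and_congr_right fun _ => forall_congr' fun j => forall_congr' fun hj => ?_
  rw [mem_truncIdeal_iff, not_lt]

lemma length_primeFactorsList_prod_pow {r : ℕ} (d : Fin r → ℕ) (s : Finset (Fin r)) :
    (∏ i ∈ s, Nat.nth Nat.Prime (i : ℕ) ^ d i).primeFactorsList.length = ∑ i ∈ s, d i := by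
  classical
  induction s using Finset.induction with
  | empty => simp
  | @insert a s ha ih =>
    have h1 : Nat.nth Nat.Prime (a : ℕ) ^ d a ≠ 0 :=
      pow_ne_zero _ (Nat.prime_nth_prime (a : ℕ)).pos.ne'
    have h2 : (∏ i ∈ s, Nat.nth Nat.Prime (i : ℕ) ^ d i) ≠ 0 :=
      Finset.prod_ne_zero_iff.mpr fun i _ =>
        pow_ne_zero _ (Nat.prime_nth_prime (i : ℕ)).pos.ne'
    rw [Finset.prod_insert ha, Finset.sum_insert ha,
      (Nat.perm_primeFactorsList_mul h1 h2).length_eq, List.length_append,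
      (Nat.prime_nth_prime (a : ℕ)).primeFactorsList_pow, List.length_replicate, ih]

lemma length_primeFactorsList_weight {r : ℕ} (d : Fin r →₀ ℕ) :
    (weight d).primeFactorsList.length = ∑ i, d i :=
  length_primeFactorsList_prod_pow (fun i => d i) Finset.univ

lemma prime_dvd_weight {r : ℕ} {d : Fin r →₀ ℕ} {q : ℕ} (hq : q.Prime)
    (h : q ∣ weight d) : ∃ i : Fin r, 0 < d i ∧ q = Nat.nth Nat.Prime (i : ℕ) := by
  rw [weight] at h
  obtain ⟨i, -, hi⟩ := (hq.prime.dvd_finset_prod_iff _).mp h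
  refine ⟨i, ?_, ?_⟩
  · by_contra hdi
    rw [Nat.eq_zero_of_not_pos hdi, pow_zero, Nat.dvd_one] at hi
    exact hq.one_lt.ne' hi
  · exact (Nat.prime_dvd_prime_iff_eq hq (Nat.prime_nth_prime _)).mp
      (hq.dvd_of_dvd_pow hi)

lemma weight_factorization {r : ℕ} (N : ℕ) (hN : N ≠ 0)
    (h : ∀ q ∈ N.primeFactors, Nat.count Nat.Prime q < r) :
    weight (Finsupp.equivFunOnFinite.symm
      fun i : Fin r => N.factorization (Nat.nth Nat.Prime (i : ℕ))) = N := by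
  classical
  rw [weight]
  simp only [Finsupp.coe_equivFunOnFinite_symm]
  have hinj : ∀ x ∈ (Finset.univ : Finset (Fin r)), ∀ y ∈ (Finset.univ : Finset (Fin r)),
      Nat.nth Nat.Prime (x : ℕ) = Nat.nth Nat.Prime (y : ℕ) → x = y :=
    fun x _ y _ hxy => Fin.ext (Nat.nth_injective Nat.infinite_setOf_prime hxy)
  have e1 : ∏ i : Fin r, Nat.nth Nat.Prime (i : ℕ) ^ N.factorization (Nat.nth Nat.Prime (i : ℕ))
      = ∏ q ∈ Finset.image (fun i : Fin r => Nat.nth Nat.Prime (i : ℕ)) Finset.univ,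
          q ^ N.factorization q :=
    (Finset.prod_image (f := fun q => q ^ N.factorization q) hinj).symm
  have hsub : N.factorization.support
      ⊆ Finset.image (fun i : Fin r => Nat.nth Nat.Prime (i : ℕ)) Finset.univ := by
    intro q hq
    rw [Nat.support_factorization] at hq
    have hqp : q.Prime := Nat.prime_of_mem_primeFactors hq
    have hc : Nat.count Nat.Prime q < r := h q hq
    exact Finset.mem_image.mpr ⟨⟨_, hc⟩, Finset.mem_univ _, Nat.nth_count hqp⟩
  have e2 : ∏ q ∈ Finset.image (fun i : Fin r => Nat.nth Nat.Prime (i : ℕ)) Finset.univ,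
      q ^ N.factorization q = ∏ q ∈ N.factorization.support, q ^ N.factorization q :=
    (Finset.prod_subset hsub fun q _ hq => by
      rw [Finsupp.notMem_support_iff.mp hq, pow_zero]).symm
  rw [e1, e2]
  exact Nat.factorization_prod_pow_eq_self hN

theorem truncIdeal_count_minimal_generators_minSupport_degree
    (K : Type*) [Field K] (n : ℕ) (hn : 1 ≤ n)
    (v : Fin (Nat.primeCounting n)) (deg : ℕ) :
    Set.ncard {d : Fin (Nat.primeCounting n) →₀ ℕ |
        IsMinGen K n (Nat.primeCounting n) d ∧ (0 < d v ∧ ∀ i < v, d i = 0) ∧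
        (∑ k, d k) = deg}
      = Set.ncard {x : ℕ |
          (n : ℚ) / (Nat.nth Nat.Prime (v : ℕ)) < (x : ℚ) ∧ x ≤ n ∧
          (∀ q : ℕ, q.Prime → q ∣ x → Nat.nth Nat.Prime (v : ℕ) ≤ q) ∧
          x.primeFactorsList.length = deg - 1} := by
  classical
  have hpp : (Nat.nth Nat.Prime (v : ℕ)).Prime := Nat.prime_nth_prime _
  set p := Nat.nth Nat.Prime (v : ℕ) with hpdef
  have hvr : (v : ℕ) < Nat.count Nat.Prime (n + 1) := v.isLt
  have hpn : p ≤ n := Nat.lt_succ_iff.mp (Nat.nth_lt_of_lt_count hvr)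
  have hp0 : (0 : ℚ) < (p : ℚ) := by exact_mod_cast hpp.pos
  have hcount : ∀ q : ℕ, q.Prime → q ≤ n →
      Nat.count Nat.Prime q < Nat.primeCounting n := by
    intro q hq hqn
    have h1 : Nat.count Nat.Prime (q + 1) = Nat.count Nat.Prime q + 1 := by
      rw [Nat.count_succ, if_pos hq]
    have h2 : Nat.count Nat.Prime (q + 1) ≤ Nat.count Nat.Prime (n + 1) :=
      Nat.count_monotone _ (by omega)
    have h3 : Nat.primeCounting n = Nat.count Nat.Prime (n + 1) := rfl
    omega
  rcases Nat.eq_zero_or_pos deg with rfl | hdeg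
  · have hA : {d : Fin (Nat.primeCounting n) →₀ ℕ |
        IsMinGen K n (Nat.primeCounting n) d ∧ (0 < d v ∧ ∀ i < v, d i = 0) ∧
        (∑ k, d k) = 0} = ∅ := by
      ext d
      simp only [Set.mem_setOf_eq, Set.mem_empty_iff_false, iff_false, not_and]
      rintro - ⟨hv, -⟩ hs
      have := Finset.sum_eq_zero_iff.mp hs v (Finset.mem_univ v)
      omega
    have hB : {x : ℕ |
          (n : ℚ) / (p : ℕ) < (x : ℚ) ∧ x ≤ n ∧
          (∀ q : ℕ, q.Prime → q ∣ x → p ≤ q) ∧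
          x.primeFactorsList.length = 0 - 1} = ∅ := by
      ext x
      simp only [Set.mem_setOf_eq, Set.mem_empty_iff_false, iff_false, not_and]
      intro h1 h2 h3 h4
      rcases (Nat.primeFactorsList_eq_nil x).mp (List.length_eq_zero_iff.mp h4) with rfl | rfl
      · have : (0 : ℚ) < (n : ℚ) / p := div_pos (by exact_mod_cast hn) hp0
        rw [Nat.cast_zero] at h1
        linarith
      · rw [Nat.cast_one] at h1
        have : (n : ℚ) < p := (div_lt_one hp0).mp h1
        have : n < p := by exact_mod_cast this
        omega
    rw [hA, hB]
    simp
  · -- main case: deg ≥ 1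
    have himg : (fun d : Fin (Nat.primeCounting n) →₀ ℕ =>
          weight (d - Finsupp.single v 1)) ''
        {d : Fin (Nat.primeCounting n) →₀ ℕ |
          IsMinGen K n (Nat.primeCounting n) d ∧ (0 < d v ∧ ∀ i < v, d i = 0) ∧
          (∑ k, d k) = deg}
        = {x : ℕ |
          (n : ℚ) / (p : ℕ) < (x : ℚ) ∧ x ≤ n ∧
          (∀ q : ℕ, q.Prime → q ∣ x → p ≤ q) ∧
          x.primeFactorsList.length = deg - 1} := by
      ext x
      simp only [Set.mem_image, Set.mem_setOf_eq]
      constructor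
      · rintro ⟨d, ⟨hmin, ⟨hdv, hltv⟩, hsum⟩, rfl⟩
        rw [isMinGen_iff] at hmin
        obtain ⟨hwn, hminle⟩ := hmin
        set e : Fin (Nat.primeCounting n) →₀ ℕ := d - Finsupp.single v 1 with hedef
        have hw : weight d = p * weight e := weight_eq_mul d v hdv
        have hxn : weight e ≤ n := hminle v hdv
        have hsum' : (∑ k : Fin (Nat.primeCounting n), e k) + 1 = deg := by
          have he : ∑ k, d k
              = ∑ k, (e k + Finsupp.single v 1 k) := by
            refine Finset.sum_congr rfl fun k _ => ?_
            rw [hedef, Finsupp.tsub_apply]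
            have hle : Finsupp.single v (1 : ℕ) k ≤ d k := by
              by_cases hk : k = v
              · subst hk; simpa using Nat.succ_le_of_lt hdv
              · simp [Finsupp.single_eq_of_ne' (Ne.symm hk)]
            omega
          rw [Finset.sum_add_distrib] at he
          have h2 : ∑ k, Finsupp.single v (1 : ℕ) k = 1 := by
            rw [Finset.sum_eq_single v]
            · simp
            · intro b _ hb
              simp [Finsupp.single_eq_of_ne' (Ne.symm hb)]
            · simp
          omega
        refine ⟨?_, hxn, ?_, ?_⟩
        · rw [div_lt_iff₀ hp0]
          have hnat : n < weight (d - Finsupp.single v 1) * p := by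
            rw [Nat.mul_comm, ← hw]; exact hwn
          exact_mod_cast hnat
        · intro q hq hqd
          obtain ⟨i, hi, rfl⟩ := prime_dvd_weight hq hqd
          have hvi : v ≤ i := by
            by_contra hlt'
            push_neg at hlt'
            have hdi0 := hltv i hlt'
            have hle : e i ≤ d i := by
              rw [hedef, Finsupp.tsub_apply]; exact Nat.sub_le _ _
            omega
          exact (Nat.nth_le_nth Nat.infinite_setOf_prime).mpr hvi
        · rw [length_primeFactorsList_weight]
          omega
      · rintro ⟨hq1, hxn, hfac, hlen⟩
        have hx0 : x ≠ 0 := by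
          rintro rfl
          have : (0 : ℚ) < (n : ℚ) / p := div_pos (by exact_mod_cast hn) hp0
          rw [Nat.cast_zero] at hq1
          linarith
        have hN0 : p * x ≠ 0 := mul_ne_zero hpp.pos.ne' hx0
        have hnpx : n < p * x := by
          have h := (div_lt_iff₀ hp0).mp hq1
          have h2 : n < x * p := by exact_mod_cast h
          rwa [Nat.mul_comm] at h2
        have hcnt : ∀ q ∈ (p * x).primeFactors,
            Nat.count Nat.Prime q < Nat.primeCounting n := by
          intro q hq
          have hqp := Nat.prime_of_mem_primeFactors hq
          have hqd := Nat.dvd_of_mem_primeFactors hq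
          have hqn : q ≤ n := by
            rcases (Nat.Prime.dvd_mul hqp).mp hqd with h | h
            · have := (Nat.prime_dvd_prime_iff_eq hqp hpp).mp h
              omega
            · exact le_trans (Nat.le_of_dvd (Nat.pos_of_ne_zero hx0) h) hxn
          exact hcount q hqp hqn
        set d := Finsupp.equivFunOnFinite.symm
          (fun i : Fin (Nat.primeCounting n) =>
            (p * x).factorization (Nat.nth Nat.Prime (i : ℕ))) with hd
        have hdw : weight d = p * x := weight_factorization _ hN0 hcnt
        have happ : ∀ i, d i = (p * x).factorization (Nat.nth Nat.Prime (i : ℕ)) :=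
          fun i => rfl
        have hdv : 0 < d v := by
          rw [happ]
          exact hpp.factorization_pos_of_dvd hN0 (dvd_mul_right _ _)
        have hzero : ∀ i, i < v → d i = 0 := by
          intro i hiv
          rw [happ]
          apply Nat.factorization_eq_zero_of_not_dvd
          intro hdvd
          have hip : (Nat.nth Nat.Prime (i : ℕ)).Prime := Nat.prime_nth_prime _
          have hltp : Nat.nth Nat.Prime (i : ℕ) < p :=
            (Nat.nth_lt_nth Nat.infinite_setOf_prime).mpr hiv
          rcases (Nat.Prime.dvd_mul hip).mp hdvd with h | h
          · exact absurd ((Nat.prime_dvd_prime_iff_eq hip hpp).mp h) hltp.ne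
          · exact absurd (hfac _ hip h) (not_le.mpr hltp)
        have hfd : weight (d - Finsupp.single v 1) = x := by
          have hh := weight_eq_mul d v hdv
          rw [hdw] at hh
          exact (Nat.eq_of_mul_eq_mul_left hpp.pos hh.symm)
        have hsum : ∑ k, d k = deg := by
          have h1 : (weight d).primeFactorsList.length = ∑ k, d k :=
            length_primeFactorsList_weight d
          have h2 : (p * x).primeFactorsList.length = 1 + (deg - 1) := by
            rw [(Nat.perm_primeFactorsList_mul hpp.pos.ne' hx0).length_eq,
              List.length_append, hlen, Nat.primeFactorsList_prime hpp,
              List.length_singleton]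
          rw [hdw] at h1
          omega
        refine ⟨d, ⟨?_, ⟨hdv, hzero⟩, hsum⟩, hfd⟩
        rw [isMinGen_iff]
        refine ⟨by rw [hdw]; exact hnpx, ?_⟩
        intro j hj
        have hpj : (Nat.nth Nat.Prime (j : ℕ)).Prime := Nat.prime_nth_prime _
        have hjd : Nat.nth Nat.Prime (j : ℕ) ∣ p * x := by
          rw [← hdw]
          refine Nat.dvd_of_factorization_pos ?_
          rw [hdw, ← happ]
          omega
        have hple : p ≤ Nat.nth Nat.Prime (j : ℕ) := by
          rcases (Nat.Prime.dvd_mul hpj).mp hjd with h | h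
          · exact le_of_eq ((Nat.prime_dvd_prime_iff_eq hpj hpp).mp h).symm
          · exact hfac _ hpj h
        have hwj := weight_eq_mul d j hj
        rw [hdw] at hwj
        have hwle : weight (d - Finsupp.single j 1) ≤ x := by
          by_contra hgt
          push_neg at hgt
          have c1 : p * x ≤ Nat.nth Nat.Prime (j : ℕ) * x :=
            Nat.mul_le_mul_right x hple
          have c2 : Nat.nth Nat.Prime (j : ℕ) * x
              < Nat.nth Nat.Prime (j : ℕ) * weight (d - Finsupp.single j 1) :=
            Nat.mul_lt_mul_of_pos_left hgt hpj.pos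
          omega
        exact le_trans hwle hxn
    have hinj : Set.InjOn (fun d : Fin (Nat.primeCounting n) →₀ ℕ =>
          weight (d - Finsupp.single v 1))
        {d : Fin (Nat.primeCounting n) →₀ ℕ |
          IsMinGen K n (Nat.primeCounting n) d ∧ (0 < d v ∧ ∀ i < v, d i = 0) ∧
          (∑ k, d k) = deg} := by
      intro d1 h1 d2 h2 heq
      apply weight_injective
      rw [weight_eq_mul d1 v h1.2.1.1, weight_eq_mul d2 v h2.2.1.1]
      simp only at heq
      rw [heq]
    rw [← himg, Set.ncard_image_of_injOn hinj]
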